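/- arXiv:2504.06377 — 3 statements merged into one kernel-verified Lean document; each statement's English description precedes it below -/
import Mathlib

section
/- Let h ∈ ℝ^N be symmetric (h_j = h_{(N-j) mod N}) and define L = ε(M − diag(M·1)) where M_{jk} = h_{(k-j) mod N}cos(2πq(k−j)/N) and 1 is the all-ones vector. Then the eigenvalues of L are λ_{m,q} = ε[(Ĥ(q+m) + Ĥ(q−m))/2 − Ĥ(q)] for m = 0, …, N−1, with corresponding eigenvectors v_m, (v_m)_j = exp(2πi·mj/N). -/
noncomputable def dftR (N : ℕ) (h : Fin N → ℝ) (m : ℤ) : ℂ :=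
  ∑ k : Fin N, (h k : ℂ) * Complex.exp (-2 * Real.pi * Complex.I * m * (k : ℕ) / N)

/-!
The cosine factor depends only on `k - j` modulo `N` (because `q` is an integer), so `M` is a
circulant matrix over the group `Fin N`, and every additive character of `Fin N`, in particular
each Fourier vector `v m`, is an eigenvector of a circulant matrix, the eigenvalue being the
character sum of its kernel. Writing the cosine as the mean of the characters of frequency `±q`,
this sum splits into two values of the DFT at shifted frequencies, and the symmetry of `h` makes
the DFT even. The row sums `M · 1` are the case `m = 0`, hence constant, so `diag (M · 1)` only
shifts the spectrum by `Ĥ(q)`.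
-/

open Complex Matrix

theorem Matrix.circulant_mulVec_addChar {G R : Type*} [AddCommGroup G] [Fintype G] [CommRing R]
    (c : G → R) (ψ : AddChar G R) :
    circulant c *ᵥ ψ = (∑ l, c l * ψ (-l)) • ⇑ψ := by
  ext j
  rw [mulVec, dotProduct, ← (Equiv.subLeft j).sum_comp, Pi.smul_apply, smul_eq_mul,
    Finset.sum_mul]
  refine Finset.sum_congr rfl fun l _ => ?_
  rw [Equiv.subLeft_apply, circulant_apply, sub_sub_cancel, sub_eq_add_neg,
    AddChar.map_add_eq_mul]
  ring

theorem Matrix.sub_diagonal_mulVec_one_mulVec {n R : Type*} [Fintype n] [DecidableEq n]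
    [Ring R] {A : Matrix n n R} {x : n → R} {μ μ₀ : R} (hx : A *ᵥ x = μ • x)
    (h1 : A *ᵥ (fun _ => 1) = μ₀ • fun _ => 1) :
    (A - diagonal (A *ᵥ fun _ => 1)) *ᵥ x = (μ - μ₀) • x := by
  ext j
  rw [sub_mulVec, hx, h1, Pi.sub_apply, mulVec_diagonal]
  simp [sub_mul]

section Fourier

variable (N : ℕ) [NeZero N]

def Fin.castZModHom : Fin N →+ ZMod N where
  toFun l := (l : ℕ)
  map_zero' := by simp
  map_add' a b := by rw [Fin.val_add, ZMod.natCast_mod, Nat.cast_add]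

noncomputable def fourierChar (a : ℤ) : AddChar (Fin N) ℂ :=
  (ZMod.stdAddChar.mulShift (a : ZMod N)).compAddMonoidHom (Fin.castZModHom N)

variable {N}

@[simp]
theorem Fin.castZModHom_apply (l : Fin N) : Fin.castZModHom N l = ((l : ℕ) : ZMod N) := rfl

theorem fourierChar_apply (a : ℤ) (l : Fin N) :
    fourierChar N a l = exp (2 * Real.pi * I * a * (l : ℕ) / N) := by
  have : (a : ZMod N) * ((l : ℕ) : ZMod N) = ((a * (l : ℕ) : ℤ) : ZMod N) := by push_cast; rfl
  rw [fourierChar, AddChar.compAddMonoidHom_apply, AddChar.mulShift_apply,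
    Fin.castZModHom_apply, this, ZMod.stdAddChar_coe]
  push_cast
  ring_nf

theorem fourierChar_zero : fourierChar N 0 = 1 := by
  ext l
  simp [fourierChar_apply]

theorem fourierChar_mul_apply (a b : ℤ) (l : Fin N) :
    fourierChar N a l * fourierChar N b l = fourierChar N (a + b) l := by
  rw [fourierChar_apply, fourierChar_apply, fourierChar_apply, ← exp_add]
  push_cast
  ring_nf

theorem fourierChar_neg_apply (a : ℤ) (l : Fin N) :
    fourierChar N a (-l) = fourierChar N (-a) l := by
  rw [AddChar.map_neg_eq_inv, fourierChar_apply, fourierChar_apply, ← exp_neg]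
  push_cast
  ring_nf

theorem fourierChar_sub_apply (a : ℤ) (j k : Fin N) :
    fourierChar N a (k - j) = exp (2 * Real.pi * I * a * ((k : ℕ) - (j : ℕ)) / N) := by
  rw [AddChar.map_sub_eq_div, fourierChar_apply, fourierChar_apply, ← exp_sub]
  ring_nf

theorem ofReal_cos_eq_fourierChar (q : ℤ) (j k : Fin N) :
    (Real.cos (2 * Real.pi * q * (((k : ℕ) : ℝ) - ((j : ℕ) : ℝ)) / N) : ℂ) =
      (fourierChar N q (k - j) + fourierChar N (-q) (k - j)) / 2 := by
  rw [ofReal_cos, cos, fourierChar_sub_apply, fourierChar_sub_apply]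
  push_cast
  ring_nf

theorem dftR_eq_sum_fourierChar (h : Fin N → ℝ) (s : ℤ) :
    dftR N h s = ∑ k, (h k : ℂ) * fourierChar N (-s) k := by
  refine Finset.sum_congr rfl fun k _ => ?_
  rw [fourierChar_apply]
  push_cast
  ring_nf

theorem dftR_neg {h : Fin N → ℝ} (hsym : ∀ j, h j = h (-j)) (s : ℤ) :
    dftR N h (-s) = dftR N h s := by
  rw [dftR_eq_sum_fourierChar, dftR_eq_sum_fourierChar]
  refine Fintype.sum_equiv (Equiv.neg (Fin N)) _ _ fun k => ?_
  rw [Equiv.neg_apply, ← hsym, fourierChar_neg_apply]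

theorem circulant_mulVec_fourierChar {h : Fin N → ℝ} (hsym : ∀ j, h j = h (-j)) (q a : ℤ) :
    circulant (fun l => (h l : ℂ) * ((fourierChar N q l + fourierChar N (-q) l) / 2)) *ᵥ
        fourierChar N a =
      ((dftR N h (q + a) + dftR N h (q - a)) / 2) • ⇑(fourierChar N a) := by
  rw [circulant_mulVec_addChar, ← dftR_neg hsym (q - a), dftR_eq_sum_fourierChar,
    dftR_eq_sum_fourierChar, ← Finset.sum_add_distrib, Finset.sum_div]
  congr 1
  refine Finset.sum_congr rfl fun l _ => ?_
  rw [fourierChar_neg_apply, neg_neg, neg_add, sub_eq_add_neg, ← fourierChar_mul_apply,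
    ← fourierChar_mul_apply]
  ring

end Fourier

/-- The eigenvalues of L = ε(M - diag(M·1)) are λ_{m,q} = ε[(Ĥ(q+m)+Ĥ(q−m))/2 − Ĥ(q)]
with eigenvectors the Fourier vectors v_m. -/
theorem stmt_6 (N : ℕ) (hN : 0 < N) (q : ℤ) (ε : ℝ) (h : Fin N → ℝ)
    (hsym : ∀ j : Fin N, h j = h (-j))
    (M : Matrix (Fin N) (Fin N) ℂ)
    (hM : ∀ j k : Fin N, M j k =
      (h (k - j) : ℂ) * (Real.cos (2 * Real.pi * q * (((k : ℕ) : ℝ) - ((j : ℕ) : ℝ)) / N) : ℂ))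
    (L : Matrix (Fin N) (Fin N) ℂ)
    (hL : L = (ε : ℂ) • (M - Matrix.diagonal (M.mulVec (fun _ => 1))))
    (v : Fin N → Fin N → ℂ)
    (hv : ∀ m j : Fin N, v m j = Complex.exp (2 * Real.pi * Complex.I * (m : ℕ) * (j : ℕ) / N)) :
    ∀ m : Fin N, L.mulVec (v m) =
      ((ε : ℂ) * ((dftR N h (q + (m : ℕ)) + dftR N h (q - (m : ℕ))) / 2 - dftR N h q)) • v m := by
  have : NeZero N := NeZero.of_pos hN
  have hMc :
      M = circulant fun l => (h l : ℂ) * ((fourierChar N q l + fourierChar N (-q) l) / 2) := by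
    ext j k
    rw [hM, circulant_apply, ofReal_cos_eq_fourierChar, ← neg_sub k j, ← hsym,
      fourierChar_neg_apply, fourierChar_neg_apply, neg_neg, add_comm (fourierChar N (-q) _)]
  have hrow := circulant_mulVec_fourierChar hsym q 0
  rw [fourierChar_zero, AddChar.coe_one, add_zero, sub_zero, ← two_mul,
    mul_div_cancel_left₀ _ two_ne_zero, ← hMc] at hrow
  intro m
  have hvm : v m = fourierChar N (m : ℕ) := by
    ext j
    rw [hv, fourierChar_apply]
    push_cast
    rfl
  rw [hL, smul_mulVec, hvm, sub_diagonal_mulVec_one_mulVec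
    (hMc ▸ circulant_mulVec_fourierChar hsym q (m : ℕ)) hrow, smul_smul]
end

section
/- On the complete graph on N ≥ 2 nodes (h_0 = 0, h_j = 1 otherwise), every twisted state with q ≢ 0 (mod N) is linearly unstable: there exists m ∈ {1,…,N−1} with λ_{m,q} = (Ĥ(q+m)+Ĥ(q−m))/2 − Ĥ(q) > 0. In fact, choosing m = q gives λ_{q,q} = (Ĥ(2q) + Ĥ(0))/2 − Ĥ(q) ≥ (−1 + (N−1))/2 + 1 = N/2 > 0. -/
/-!
On the complete graph `h = 1 - δ₀`, so `Ĥ(r)` is a full sum of `N`-th roots of unity minus `1`: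
it equals `N - 1` when `N ∣ r` and `-1` otherwise. If `N ∣ q - m` but `N ∤ q`, then
`λ_{m,q} = (Ĥ(q+m) + (N - 1))/2 + 1 ≥ (-1 + N - 1)/2 + 1 = N/2`; both `m = q` and the
representative `m = q mod N ∈ {1, …, N-1}` qualify.
-/

open Complex Finset
open scoped Real

lemma exp_neg_two_pi_I_mul_div_eq_one_iff {N : ℕ} (hN : N ≠ 0) (m : ℤ) :
    exp (-2 * π * I * m / N) = 1 ↔ (N : ℤ) ∣ m := by
  have hN' : (N : ℂ) ≠ 0 := Nat.cast_ne_zero.2 hN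
  rw [exp_eq_one_iff]
  constructor
  · rintro ⟨n, hn⟩
    refine ⟨-n, ?_⟩
    have hm : (m : ℂ) = (N : ℂ) * (-n : ℤ) := by
      field_simp at hn
      push_cast
      linear_combination -hn
    exact_mod_cast hm
  · rintro ⟨t, rfl⟩
    exact ⟨-t, by push_cast; field_simp⟩

lemma sum_exp_neg_two_pi_I_mul_div {N : ℕ} (hN : N ≠ 0) (m : ℤ) :
    ∑ k : Fin N, exp (-2 * π * I * m * (k : ℕ) / N) = if (N : ℤ) ∣ m then (N : ℂ) else 0 := by
  set ζ := exp (-2 * π * I * m / N)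
  have hpow (k : ℕ) : exp (-2 * π * I * m * k / N) = ζ ^ k := by
    rw [← exp_nat_mul]; ring_nf
  simp_rw [hpow, Fin.sum_univ_eq_sum_range (ζ ^ ·)]
  split_ifs with hm
  · have hζ : ζ = 1 := (exp_neg_two_pi_I_mul_div_eq_one_iff hN m).2 hm
    simp [hζ]
  · have hζN : ζ ^ N = 1 := by
      rw [← exp_nat_mul, ← exp_int_mul_two_pi_mul_I (-m)]
      congr 1
      push_cast
      field_simp
    rw [geom_sum_eq ((exp_neg_two_pi_I_mul_div_eq_one_iff hN m).not.2 hm), hζN, sub_self,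
      zero_div]

lemma dftR_of_complete_graph {N : ℕ} (hN : N ≠ 0) {h : Fin N → ℝ}
    (hh0 : ∀ j : Fin N, (j : ℕ) = 0 → h j = 0) (hh1 : ∀ j : Fin N, (j : ℕ) ≠ 0 → h j = 1)
    (m : ℤ) : dftR N h m = ((if (N : ℤ) ∣ m then (N : ℝ) - 1 else -1 : ℝ) : ℂ) := by
  have : NeZero N := ⟨hN⟩
  have hcoe (k : Fin N) : (h k : ℂ) = 1 - if k = 0 then 1 else 0 := by
    by_cases hk : k = 0
    · simp [hk, hh0 0 rfl]
    · simp [hk, hh1 k (Fin.val_ne_zero_iff.2 hk)]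
  simp only [dftR, hcoe, sub_mul, one_mul, ite_mul, zero_mul, sum_sub_distrib, sum_ite_eq',
    mem_univ, if_true, Fin.val_zero, Nat.cast_zero, mul_zero, zero_div, exp_zero,
    sum_exp_neg_two_pi_I_mul_div hN]
  split_ifs <;> push_cast <;> ring

noncomputable def stabilityExponent (N : ℕ) (h : Fin N → ℝ) (m q : ℤ) : ℝ :=
  ((dftR N h (q + m) + dftR N h (q - m)) / 2 - dftR N h q).re

lemma half_le_stabilityExponent_of_complete_graph {N : ℕ} (hN : N ≠ 0) {h : Fin N → ℝ}
    (hh0 : ∀ j : Fin N, (j : ℕ) = 0 → h j = 0) (hh1 : ∀ j : Fin N, (j : ℕ) ≠ 0 → h j = 1)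
    {m q : ℤ} (hq : ¬ (N : ℤ) ∣ q) (hm : (N : ℤ) ∣ q - m) :
    (N : ℝ) / 2 ≤ stabilityExponent N h m q := by
  simp only [stabilityExponent, dftR_of_complete_graph hN hh0 hh1, if_pos hm, if_neg hq]
  have hN' : (0 : ℝ) ≤ N := N.cast_nonneg
  split_ifs <;>
    simp only [ofReal_neg, ofReal_one, ofReal_sub, ofReal_natCast, sub_neg_eq_add, add_re,
      div_ofNat_re, neg_re, one_re, sub_re, natCast_re] <;>
    linarith

/-- On the complete graph every twisted state with q ≢ 0 (mod N) is linearly unstable;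
in fact the mode m = q gives λ_{q,q} ≥ N/2 > 0. -/
theorem stmt_13 (N : ℕ) (hN : 2 ≤ N) (h : Fin N → ℝ)
    (hh0 : ∀ j : Fin N, (j : ℕ) = 0 → h j = 0)
    (hh1 : ∀ j : Fin N, (j : ℕ) ≠ 0 → h j = 1)
    (q : ℤ) (hq : ¬ (N : ℤ) ∣ q) :
    (∃ m : ℤ, 1 ≤ m ∧ m ≤ (N : ℤ) - 1 ∧
      0 < ((dftR N h (q + m) + dftR N h (q - m)) / 2 - dftR N h q).re) ∧
    (N : ℝ) / 2 ≤ ((dftR N h (q + q) + dftR N h (q - q)) / 2 - dftR N h q).re := by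
  have hN0 : N ≠ 0 := by omega
  have hNpos : (0 : ℤ) < N := by omega
  have half_le {m : ℤ} (hm : (N : ℤ) ∣ q - m) : (N : ℝ) / 2 ≤ stabilityExponent N h m q :=
    half_le_stabilityExponent_of_complete_graph hN0 hh0 hh1 hq hm
  refine ⟨⟨q % N, ?_, ?_, ?_⟩, half_le (by simp)⟩
  · have : q % N ≠ 0 := fun h0 => hq (Int.dvd_of_emod_eq_zero h0)
    have := Int.emod_nonneg q hNpos.ne'
    omega
  · have := Int.emod_lt_of_pos q hNpos
    omega
  · calc (0 : ℝ) < N / 2 := by positivity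
      _ ≤ _ := half_le (Int.dvd_self_sub_of_emod_eq rfl)
end

section
/- For the nearest-neighbor ring (k = 1, so h_1 = h_{N−1} = 1, all other entries 0), Ĥ(q) = 2cos(2πq/N) and the stability eigenvalues are λ_{m,q} = 2cos(2πq/N)[cos(2πm/N) − 1]. Hence for all q with cos(2πq/N) > 0 (i.e., |q| < N/4), all λ_{m,q} ≤ 0 for m ∈ {1,…,N−1}, so these twisted states are linearly stable. -/
open Complex
open scoped Real

lemma dftR_eq_add_of_support_pair {N : ℕ} {h : Fin N → ℝ} {i j : Fin N} (hij : i ≠ j)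
    (hi : h i = 1) (hj : h j = 1) (hzero : ∀ k, k ≠ i ∧ k ≠ j → h k = 0) (m : ℤ) :
    dftR N h m = exp (-2 * π * I * m * (i : ℕ) / N) + exp (-2 * π * I * m * (j : ℕ) / N) := by
  rw [dftR, Fintype.sum_eq_add i j hij fun k hk => by simp [hzero k hk], hi, hj]
  push_cast
  ring

lemma exp_neg_two_pi_I_mul_sub_div {N : ℕ} (hN : N ≠ 0) (m : ℤ) (k : ℂ) :
    exp (-2 * π * I * m * (N - k) / N) = exp (2 * π * I * m * k / N) := by
  have hsplit : -2 * π * I * m * (N - k) / N = 2 * π * I * m * k / N + (-m : ℤ) * (2 * π * I) := by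
    field_simp
    push_cast
    ring
  rw [hsplit, exp_add, exp_int_mul_two_pi_mul_I, mul_one]

lemma dftR_nearestNeighbor {N : ℕ} (hN : 3 ≤ N) {h : Fin N → ℝ}
    (hh : ∀ j : Fin N, h j = if (j : ℕ) = 1 ∨ (j : ℕ) = N - 1 then 1 else 0) (q : ℤ) :
    dftR N h q = ((2 * Real.cos (2 * π * q / N) : ℝ) : ℂ) := by
  let one : Fin N := ⟨1, by omega⟩
  let last : Fin N := ⟨N - 1, by omega⟩
  have hne : one ≠ last := Fin.ne_of_val_ne (by simp [one, last]; omega)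
  rw [dftR_eq_add_of_support_pair hne (by simp [hh, one]) (by simp [hh, last])
    (fun k hk => by simp [hh, Fin.ext_iff, one, last] at hk ⊢; omega)]
  have hlast : ((last : ℕ) : ℂ) = N - 1 := by simp [last, Nat.cast_sub (by omega : 1 ≤ N)]
  rw [hlast, exp_neg_two_pi_I_mul_sub_div (by omega)]
  push_cast
  rw [two_cos, add_comm]
  congr 2 <;> simp [one] <;> ring

/-- The paper's `λ_{m,q}`, with `H = Ĥ` the transform of the coupling kernel. -/
noncomputable def stabilityEigenvalue (H : ℤ → ℂ) (q m : ℤ) : ℂ :=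
  (H (q + m) + H (q - m)) / 2 - H q

section CosineTransform

variable {H : ℤ → ℂ} {T : ℝ}

lemma stabilityEigenvalue_eq_of_cos
    (hH : ∀ q : ℤ, H q = ((2 * Real.cos (2 * π * q / T) : ℝ) : ℂ)) (q m : ℤ) :
    stabilityEigenvalue H q m
      = ((2 * Real.cos (2 * π * q / T) * (Real.cos (2 * π * m / T) - 1) : ℝ) : ℂ) := by
  have hreal : (2 * Real.cos (2 * π * (q + m : ℤ) / T) + 2 * Real.cos (2 * π * (q - m : ℤ) / T)) / 2
      - 2 * Real.cos (2 * π * q / T)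
      = 2 * Real.cos (2 * π * q / T) * (Real.cos (2 * π * m / T) - 1) := by
    have := Real.two_mul_cos_mul_cos (2 * π * q / T) (2 * π * m / T)
    push_cast
    rw [show 2 * π * (q + m) / T = 2 * π * q / T + 2 * π * m / T by ring,
      show 2 * π * (q - m) / T = 2 * π * q / T - 2 * π * m / T by ring]
    linarith
  rw [stabilityEigenvalue, hH, hH, hH, ← hreal]
  push_cast
  ring

lemma stabilityEigenvalue_re_nonpos_of_cos
    (hH : ∀ q : ℤ, H q = ((2 * Real.cos (2 * π * q / T) : ℝ) : ℂ)) {q : ℤ}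
    (hq : 0 < Real.cos (2 * π * q / T)) (m : ℤ) :
    (stabilityEigenvalue H q m).re ≤ 0 := by
  rw [stabilityEigenvalue_eq_of_cos hH, ofReal_re]
  have := Real.cos_le_one (2 * π * m / T)
  nlinarith

end CosineTransform

/-- Nearest-neighbor ring: Ĥ(q) = 2cos(2πq/N), λ_{m,q} = 2cos(2πq/N)[cos(2πm/N)−1],
and twisted states with cos(2πq/N) > 0 are linearly stable. -/
theorem stmt_14 (N : ℕ) (hN : 3 ≤ N) (h : Fin N → ℝ)
    (hh : ∀ j : Fin N, h j = if (j : ℕ) = 1 ∨ (j : ℕ) = N - 1 then 1 else 0) :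
    (∀ q : ℤ, dftR N h q = ((2 * Real.cos (2 * Real.pi * q / N) : ℝ) : ℂ)) ∧
    (∀ q m : ℤ, (dftR N h (q + m) + dftR N h (q - m)) / 2 - dftR N h q
      = ((2 * Real.cos (2 * Real.pi * q / N) * (Real.cos (2 * Real.pi * m / N) - 1) : ℝ) : ℂ)) ∧
    (∀ q : ℤ, 0 < Real.cos (2 * Real.pi * q / N) →
      ∀ m : ℤ, 1 ≤ m → m ≤ (N : ℤ) - 1 →
        ((dftR N h (q + m) + dftR N h (q - m)) / 2 - dftR N h q).re ≤ 0) := by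
  have hdft := dftR_nearestNeighbor hN hh
  exact ⟨hdft, stabilityEigenvalue_eq_of_cos hdft,
    fun q hq m _ _ => stabilityEigenvalue_re_nonpos_of_cos hdft hq m⟩
end
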